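/- Consider a packing of axis-parallel squares into the unit square where one square has side $s_0 > 0.6$, there are exactly three other squares of side $> 1/3$, and all remaining squares have side $> 1/5$; all interiors are pairwise disjoint. Then, besides the square of side $> 0.6$, the packing contains at most six other squares, at most three of which have side in $(1/5, 1/3]$. -/
import Mathlib

open Finset

/-- Sum of lengths of pairwise non-overlapping intervals `[y i, y i + s i] ⊆ [l, r]`
is at most `r - l`. -/
lemma square_packing_sum_intervals {ι : Type*} [DecidableEq ι] (S : Finset ι) (y s : ι → ℝ) :
    ∀ (l r : ℝ), l ≤ r →
    (∀ i ∈ S, 0 < s i) → (∀ i ∈ S, l ≤ y i) → (∀ i ∈ S, y i + s i ≤ r) →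
    (∀ i ∈ S, ∀ j ∈ S, i ≠ j → y i + s i ≤ y j ∨ y j + s j ≤ y i) →
    ∑ i ∈ S, s i ≤ r - l := by
  induction S using Finset.strongInduction with
  | _ S ih =>
    intro l r hlr hpos hl hr hsep
    rcases S.eq_empty_or_nonempty with rfl | hne
    · simpa using hlr
    · obtain ⟨i, hiS, hmax⟩ := S.exists_max_image y hne
      have hkey : ∀ j ∈ S.erase i, y j + s j ≤ y i := by
        intro j hj
        have hjS := Finset.mem_of_mem_erase hj
        have hji : j ≠ i := Finset.ne_of_mem_erase hj
        rcases hsep i hiS j hjS hji.symm with h | h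
        · exfalso
          have := hmax j hjS
          have := hpos i hiS
          linarith
        · exact h
      have hsub : S.erase i ⊂ S := Finset.erase_ssubset hiS
      have hih : ∑ j ∈ S.erase i, s j ≤ y i - l := by
        refine ih _ hsub l (y i) (hl i hiS) ?_ ?_ hkey ?_
        · exact fun j hj => hpos j (Finset.mem_of_mem_erase hj)
        · exact fun j hj => hl j (Finset.mem_of_mem_erase hj)
        · exact fun a ha b hb hab =>
            hsep a (Finset.mem_of_mem_erase ha) b (Finset.mem_of_mem_erase hb) hab
      have := hr i hiS
      have hsum : ∑ j ∈ S, s j = s i + ∑ j ∈ S.erase i, s j :=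
        (Finset.add_sum_erase S s hiS).symm
      linarith

/-- Lower bound of a sum of sides, splitting into mediums and smalls. -/
lemma square_packing_sum_lb {n : ℕ} (s : Fin n → ℝ) (S : Finset (Fin n))
    (hall : ∀ i, 1/5 < s i) :
    ((S.filter (fun i => 1/3 < s i)).card : ℝ) / 3
      + ((S.filter (fun i => s i ≤ 1/3)).card : ℝ) / 5 ≤ ∑ i ∈ S, s i := by
  classical
  have hpart : S = S.filter (fun i => 1/3 < s i) ∪ S.filter (fun i => s i ≤ 1/3) := by
    ext i; simp only [Finset.mem_union, Finset.mem_filter]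
    constructor
    · intro h; rcases lt_or_ge (1/3 : ℝ) (s i) with h' | h'
      · exact Or.inl ⟨h, h'⟩
      · exact Or.inr ⟨h, h'⟩
    · rintro (⟨h, _⟩ | ⟨h, _⟩) <;> exact h
  have hdisj : Disjoint (S.filter (fun i => 1/3 < s i)) (S.filter (fun i => s i ≤ 1/3)) := by
    rw [Finset.disjoint_left]
    intro i hi hi'
    simp only [Finset.mem_filter] at hi hi'
    linarith [hi.2, hi'.2]
  have h1 : ((S.filter (fun i => 1/3 < s i)).card : ℝ) * (1/3)
      ≤ ∑ i ∈ S.filter (fun i => 1/3 < s i), s i := by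
    have := Finset.card_nsmul_le_sum (S.filter (fun i => 1/3 < s i)) s (1/3)
      (fun i hi => le_of_lt (Finset.mem_filter.mp hi).2)
    simpa [nsmul_eq_mul] using this
  have h2 : ((S.filter (fun i => s i ≤ 1/3)).card : ℝ) * (1/5)
      ≤ ∑ i ∈ S.filter (fun i => s i ≤ 1/3), s i := by
    have := Finset.card_nsmul_le_sum (S.filter (fun i => s i ≤ 1/3)) s (1/5)
      (fun i hi => le_of_lt (hall i))
    simpa [nsmul_eq_mul] using this
  have hsum : ∑ i ∈ S, s i = ∑ i ∈ S.filter (fun i => 1/3 < s i), s i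
      + ∑ i ∈ S.filter (fun i => s i ≤ 1/3), s i := by
    conv_lhs => rw [hpart]
    exact Finset.sum_union hdisj
  linarith

/-- Core combinatorial lemma: the packing normalized so that the big square is in the
lower-left corner region. -/
lemma square_packing_core (n : ℕ) (x y s : Fin n → ℝ) (i₀ : Fin n)
    (hbig : 3/5 < s i₀)
    (hall : ∀ i, 1/5 < s i)
    (hx0 : x i₀ ≤ 1/5) (hy0 : y i₀ ≤ 1/5)
    (hb : ∀ i, 0 ≤ x i ∧ x i + s i ≤ 1 ∧ 0 ≤ y i ∧ y i + s i ≤ 1)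
    (hsep : ∀ i j, i ≠ j →
      x i + s i ≤ x j ∨ x j + s j ≤ x i ∨ y i + s i ≤ y j ∨ y j + s j ≤ y i)
    (hthree : (univ.filter (fun i => i ≠ i₀ ∧ 1 / 3 < s i)).card = 3) :
    n ≤ 7 ∧ (univ.filter (fun i => i ≠ i₀ ∧ s i ≤ 1 / 3)).card ≤ 3 := by
  classical
  set M := univ.filter (fun i => i ≠ i₀ ∧ 1 / 3 < s i) with hM
  set K := univ.filter (fun i => i ≠ i₀ ∧ s i ≤ 1 / 3) with hK
  -- every non-big square crosses x = 4/5 or y = 4/5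
  have hcross : ∀ i, i ≠ i₀ → (x i < 4/5 ∧ 4/5 < x i + s i) ∨ (y i < 4/5 ∧ 4/5 < y i + s i) := by
    intro i hi
    obtain ⟨hx1, hx2, hy1, hy2⟩ := hb i
    obtain ⟨hx1', hx2', hy1', hy2'⟩ := hb i₀
    have hsi := hall i
    rcases hsep i i₀ hi with h | h | h | h
    · exfalso; linarith
    · left; constructor <;> linarith
    · exfalso; linarith
    · right; constructor <;> linarith
  -- two squares both crossing x = 4/5 are y-separated
  have hsepX : ∀ i j, i ≠ j → (x i < 4/5 ∧ 4/5 < x i + s i) → (x j < 4/5 ∧ 4/5 < x j + s j) →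
      y i + s i ≤ y j ∨ y j + s j ≤ y i := by
    intro i j hij hi hj
    rcases hsep i j hij with h | h | h | h
    · exfalso; linarith [hi.2, hj.1]
    · exfalso; linarith [hj.2, hi.1]
    · exact Or.inl h
    · exact Or.inr h
  have hsepY : ∀ i j, i ≠ j → (y i < 4/5 ∧ 4/5 < y i + s i) → (y j < 4/5 ∧ 4/5 < y j + s j) →
      x i + s i ≤ x j ∨ x j + s j ≤ x i := by
    intro i j hij hi hj
    rcases hsep i j hij with h | h | h | h
    · exact Or.inl h
    · exact Or.inr h
    · exfalso; linarith [hi.2, hj.1]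
    · exfalso; linarith [hj.2, hi.1]
  -- it suffices to bound K
  have hpart : n ≤ 1 + M.card + K.card := by
    have hsub : (univ : Finset (Fin n)) ⊆ {i₀} ∪ M ∪ K := by
      intro i _
      by_cases hi : i = i₀
      · subst hi; simp
      · rcases le_or_gt (s i) (1/3) with h | h
        · simp only [Finset.mem_union, hK, Finset.mem_filter, Finset.mem_singleton]
          exact Or.inr ⟨Finset.mem_univ i, hi, h⟩
        · simp only [Finset.mem_union, hM, Finset.mem_filter, Finset.mem_singleton]
          exact Or.inl (Or.inr ⟨Finset.mem_univ i, hi, h⟩)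
    calc n = (univ : Finset (Fin n)).card := by simp
    _ ≤ ({i₀} ∪ M ∪ K).card := Finset.card_le_card hsub
    _ ≤ ({i₀} ∪ M).card + K.card := Finset.card_union_le _ _
    _ ≤ ({i₀} : Finset (Fin n)).card + M.card + K.card := by
        have := Finset.card_union_le ({i₀} : Finset (Fin n)) M; omega
    _ = 1 + M.card + K.card := by simp
  suffices hKle : K.card ≤ 3 by exact ⟨by omega, hKle⟩
  by_cases hQ : ∃ q, q ≠ i₀ ∧ (x q < 4/5 ∧ 4/5 < x q + s q) ∧ (y q < 4/5 ∧ 4/5 < y q + s q)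
  · -- Case A : a square crosses both lines
    obtain ⟨q, hq0, hqX, hqY⟩ := hQ
    set A := univ.filter (fun i => i ≠ i₀ ∧ i ≠ q ∧ (x i < 4/5 ∧ 4/5 < x i + s i)) with hA
    set B := univ.filter (fun i => i ≠ i₀ ∧ i ≠ q ∧ ¬(x i < 4/5 ∧ 4/5 < x i + s i)) with hB
    have hAmem : ∀ i ∈ A, i ≠ i₀ ∧ i ≠ q ∧ (x i < 4/5 ∧ 4/5 < x i + s i) := by
      intro i hi; simpa [hA] using hi
    have hBmem : ∀ i ∈ B, i ≠ i₀ ∧ i ≠ q ∧ (y i < 4/5 ∧ 4/5 < y i + s i) := by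
      intro i hi
      simp only [hB, Finset.mem_filter] at hi
      obtain ⟨_, h1, h2, h3⟩ := hi
      exact ⟨h1, h2, (hcross i h1).resolve_left h3⟩
    -- members of A lie below q
    have hAbelow : ∀ i ∈ A, y i + s i ≤ y q := by
      intro i hi
      obtain ⟨hi0, hiq, hiX⟩ := hAmem i hi
      rcases hsepX i q hiq hiX hqX with h | h
      · exact h
      · exfalso; obtain ⟨_, _, _, hy2⟩ := hb i; linarith [hall i, hqY.2]
    have hBleft : ∀ i ∈ B, x i + s i ≤ x q := by
      intro i hi
      obtain ⟨hi0, hiq, hiY⟩ := hBmem i hi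
      rcases hsepY i q hiq hiY hqY with h | h
      · exact h
      · exfalso; obtain ⟨_, hx2, _, _⟩ := hb i; linarith [hall i, hqX.2]
    obtain ⟨hqx1, hqx2, hqy1, hqy2⟩ := hb q
    have hSA : ∑ i ∈ A, s i ≤ y q - 0 := by
      refine square_packing_sum_intervals A y s 0 (y q) hqy1
        (fun i _ => lt_trans (by norm_num) (hall i))
        (fun i _ => (hb i).2.2.1) hAbelow ?_
      intro i hi j hj hij
      exact hsepX i j hij (hAmem i hi).2.2 (hAmem j hj).2.2
    have hSB : ∑ i ∈ B, s i ≤ x q - 0 := by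
      refine square_packing_sum_intervals B x s 0 (x q) hqx1
        (fun i _ => lt_trans (by norm_num) (hall i))
        (fun i _ => (hb i).1) hBleft ?_
      intro i hi j hj hij
      exact hsepY i j hij (hBmem i hi).2.2 (hBmem j hj).2.2
    have hlbA := square_packing_sum_lb s A hall
    have hlbB := square_packing_sum_lb s B hall
    set mA := (A.filter (fun i => 1/3 < s i)).card
    set kA := (A.filter (fun i => s i ≤ 1/3)).card
    set mB := (B.filter (fun i => 1/3 < s i)).card
    set kB := (B.filter (fun i => s i ≤ 1/3)).card
    -- M is contained in the union
    have hMsub : M ⊆ A.filter (fun i => 1/3 < s i) ∪ B.filter (fun i => 1/3 < s i) ∪ {q} := by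
      intro i hi
      simp only [hM, Finset.mem_filter] at hi
      obtain ⟨_, hi0, him⟩ := hi
      by_cases hiq : i = q
      · simp [hiq]
      · simp only [Finset.mem_union, Finset.mem_filter, hA, hB, Finset.mem_univ, true_and]
        by_cases hx : x i < 4/5 ∧ 4/5 < x i + s i
        · exact Or.inl (Or.inl ⟨⟨hi0, hiq, hx⟩, by norm_num at him ⊢; linarith⟩)
        · exact Or.inl (Or.inr ⟨⟨hi0, hiq, hx⟩, by norm_num at him ⊢; linarith⟩)
    have hKsub : K ⊆ A.filter (fun i => s i ≤ 1/3) ∪ B.filter (fun i => s i ≤ 1/3) ∪ {q} := by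
      intro i hi
      simp only [hK, Finset.mem_filter] at hi
      obtain ⟨_, hi0, him⟩ := hi
      by_cases hiq : i = q
      · simp [hiq]
      · simp only [Finset.mem_union, Finset.mem_filter, hA, hB, Finset.mem_univ, true_and]
        by_cases hx : x i < 4/5 ∧ 4/5 < x i + s i
        · exact Or.inl (Or.inl ⟨⟨hi0, hiq, hx⟩, by norm_num at him ⊢; linarith⟩)
        · exact Or.inl (Or.inr ⟨⟨hi0, hiq, hx⟩, by norm_num at him ⊢; linarith⟩)
    rcases le_or_gt (s q) (1/3) with hqs | hqs
    · -- q is small : all three mediums are in A ∪ B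
      have hMsub' : M ⊆ A.filter (fun i => 1/3 < s i) ∪ B.filter (fun i => 1/3 < s i) := by
        intro i hi
        have := hMsub hi
        simp only [Finset.mem_union, Finset.mem_singleton] at this ⊢
        rcases this with (h | h) | h
        · exact Or.inl h
        · exact Or.inr h
        · exfalso; subst h
          simp only [hM, Finset.mem_filter, Finset.mem_univ, true_and] at hi
          linarith [hi.2]
      have hm : 3 ≤ mA + mB := by
        have := Finset.card_le_card hMsub'
        have h2 := Finset.card_union_le (A.filter (fun i => 1/3 < s i))
          (B.filter (fun i => 1/3 < s i))
        rw [hthree] at this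
        omega
      have hk : kA + kB ≤ 2 := by
        by_contra hcon
        push_neg at hcon
        have h1 : (3 : ℝ) ≤ (mA : ℝ) + mB := by exact_mod_cast hm
        have h2 : (3 : ℝ) ≤ (kA : ℝ) + kB := by
          have : (3 : ℕ) ≤ kA + kB := hcon
          exact_mod_cast this
        have hq5 := hall q
        linarith
      have := Finset.card_le_card hKsub
      have h2 := Finset.card_union_le
        (A.filter (fun i => s i ≤ 1/3) ∪ B.filter (fun i => s i ≤ 1/3)) ({q} : Finset (Fin n))
      have h3 := Finset.card_union_le (A.filter (fun i => s i ≤ 1/3))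
        (B.filter (fun i => s i ≤ 1/3))
      simp only [Finset.card_singleton] at h2
      omega
    · -- q is medium : at least two mediums in A ∪ B, and K avoids q
      have hKsub' : K ⊆ A.filter (fun i => s i ≤ 1/3) ∪ B.filter (fun i => s i ≤ 1/3) := by
        intro i hi
        have := hKsub hi
        simp only [Finset.mem_union, Finset.mem_singleton] at this ⊢
        rcases this with (h | h) | h
        · exact Or.inl h
        · exact Or.inr h
        · exfalso; subst h
          simp only [hK, Finset.mem_filter, Finset.mem_univ, true_and] at hi
          linarith [hi.2]
      have hm : 2 ≤ mA + mB := by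
        have := Finset.card_le_card hMsub
        have h2 := Finset.card_union_le
          (A.filter (fun i => 1/3 < s i) ∪ B.filter (fun i => 1/3 < s i)) ({q} : Finset (Fin n))
        have h3 := Finset.card_union_le (A.filter (fun i => 1/3 < s i))
          (B.filter (fun i => 1/3 < s i))
        simp only [Finset.card_singleton] at h2
        rw [hthree] at this
        omega
      have hk : kA + kB ≤ 3 := by
        by_contra hcon
        push_neg at hcon
        have h1 : (2 : ℝ) ≤ (mA : ℝ) + mB := by exact_mod_cast hm
        have h2 : (4 : ℝ) ≤ (kA : ℝ) + kB := by
          have : (4 : ℕ) ≤ kA + kB := hcon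
          exact_mod_cast this
        linarith
      have := Finset.card_le_card hKsub'
      have h3 := Finset.card_union_le (A.filter (fun i => s i ≤ 1/3))
        (B.filter (fun i => s i ≤ 1/3))
      omega
  · -- Case B : no square crosses both lines
    push_neg at hQ
    set A := univ.filter (fun i => i ≠ i₀ ∧ (x i < 4/5 ∧ 4/5 < x i + s i)) with hA
    set B := univ.filter (fun i => i ≠ i₀ ∧ ¬(x i < 4/5 ∧ 4/5 < x i + s i)) with hB
    have hAmem : ∀ i ∈ A, i ≠ i₀ ∧ (x i < 4/5 ∧ 4/5 < x i + s i) := by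
      intro i hi; simpa [hA] using hi
    have hBmem : ∀ i ∈ B, i ≠ i₀ ∧ (y i < 4/5 ∧ 4/5 < y i + s i) := by
      intro i hi
      simp only [hB, Finset.mem_filter] at hi
      obtain ⟨_, h1, h3⟩ := hi
      exact ⟨h1, (hcross i h1).resolve_left h3⟩
    have hAbelow : ∀ i ∈ A, y i + s i ≤ 4/5 := by
      intro i hi
      obtain ⟨hi0, hiX⟩ := hAmem i hi
      by_contra hcon
      push_neg at hcon
      have hyi : y i < 4/5 := by obtain ⟨_, _, _, hy2⟩ := hb i; linarith [hall i]
      have h := hQ i hi0 hiX hyi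
      linarith
    have hBleft : ∀ i ∈ B, x i + s i ≤ 4/5 := by
      intro i hi
      obtain ⟨hi0, hiY⟩ := hBmem i hi
      simp only [hB, Finset.mem_filter] at hi
      have hnx := hi.2.2
      push_neg at hnx
      by_contra hcon
      push_neg at hcon
      have hxi : x i < 4/5 := by obtain ⟨_, hx2, _, _⟩ := hb i; linarith [hall i]
      linarith [hnx hxi]
    have hSA : ∑ i ∈ A, s i ≤ 4/5 - 0 := by
      refine square_packing_sum_intervals A y s 0 (4/5) (by norm_num)
        (fun i _ => lt_trans (by norm_num) (hall i))
        (fun i _ => (hb i).2.2.1) hAbelow ?_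
      intro i hi j hj hij
      exact hsepX i j hij (hAmem i hi).2 (hAmem j hj).2
    have hSB : ∑ i ∈ B, s i ≤ 4/5 - 0 := by
      refine square_packing_sum_intervals B x s 0 (4/5) (by norm_num)
        (fun i _ => lt_trans (by norm_num) (hall i))
        (fun i _ => (hb i).1) hBleft ?_
      intro i hi j hj hij
      exact hsepY i j hij (hBmem i hi).2 (hBmem j hj).2
    have hlbA := square_packing_sum_lb s A hall
    have hlbB := square_packing_sum_lb s B hall
    set mA := (A.filter (fun i => 1/3 < s i)).card
    set kA := (A.filter (fun i => s i ≤ 1/3)).card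
    set mB := (B.filter (fun i => 1/3 < s i)).card
    set kB := (B.filter (fun i => s i ≤ 1/3)).card
    have hMsub : M ⊆ A.filter (fun i => 1/3 < s i) ∪ B.filter (fun i => 1/3 < s i) := by
      intro i hi
      simp only [hM, Finset.mem_filter] at hi
      obtain ⟨_, hi0, him⟩ := hi
      simp only [Finset.mem_union, Finset.mem_filter, hA, hB, Finset.mem_univ, true_and]
      by_cases hx : x i < 4/5 ∧ 4/5 < x i + s i
      · exact Or.inl ⟨⟨hi0, hx⟩, by norm_num at him ⊢; linarith⟩
      · exact Or.inr ⟨⟨hi0, hx⟩, by norm_num at him ⊢; linarith⟩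
    have hKsub : K ⊆ A.filter (fun i => s i ≤ 1/3) ∪ B.filter (fun i => s i ≤ 1/3) := by
      intro i hi
      simp only [hK, Finset.mem_filter] at hi
      obtain ⟨_, hi0, him⟩ := hi
      simp only [Finset.mem_union, Finset.mem_filter, hA, hB, Finset.mem_univ, true_and]
      by_cases hx : x i < 4/5 ∧ 4/5 < x i + s i
      · exact Or.inl ⟨⟨hi0, hx⟩, by norm_num at him ⊢; linarith⟩
      · exact Or.inr ⟨⟨hi0, hx⟩, by norm_num at him ⊢; linarith⟩
    have hm : 3 ≤ mA + mB := by
      have := Finset.card_le_card hMsub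
      have h3 := Finset.card_union_le (A.filter (fun i => 1/3 < s i))
        (B.filter (fun i => 1/3 < s i))
      rw [hthree] at this
      omega
    have hk : kA + kB ≤ 3 := by
      by_contra hcon
      push_neg at hcon
      have h1 : (3 : ℝ) ≤ (mA : ℝ) + mB := by exact_mod_cast hm
      have h2 : (4 : ℝ) ≤ (kA : ℝ) + kB := by
        have : (4 : ℕ) ≤ kA + kB := hcon
        exact_mod_cast this
      linarith
    have := Finset.card_le_card hKsub
    have h3 := Finset.card_union_le (A.filter (fun i => s i ≤ 1/3))
      (B.filter (fun i => s i ≤ 1/3))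
    omega

open Finset in
/-- In a unit-square packing with one square of side `> 0.6`, exactly three other
squares of side `> 1/3`, and all remaining squares of side `> 1/5`, there are at
most six squares besides the large one, at most three of which have side in
`(1/5, 1/3]`. -/
theorem square_packing_bound (n : ℕ) (hn : 1 ≤ n)
    (c : Fin n → Fin 2 → ℝ) (s : Fin n → ℝ) (i₀ : Fin n)
    (hbig : 0.6 < s i₀)
    (hthree : (univ.filter (fun i => i ≠ i₀ ∧ 1 / 3 < s i)).card = 3)
    (hall : ∀ i, 1 / 5 < s i)
    (hsub : ∀ i, (Set.univ.pi fun j => Set.Icc (c i j) (c i j + s i)) ⊆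
      Set.univ.pi fun _ : Fin 2 => Set.Icc (0 : ℝ) 1)
    (hdisj : ∀ i j, i ≠ j →
      Disjoint (interior (Set.univ.pi fun k => Set.Icc (c i k) (c i k + s i)))
               (interior (Set.univ.pi fun k => Set.Icc (c j k) (c j k + s j)))) :
    n ≤ 7 ∧ (univ.filter (fun i => i ≠ i₀ ∧ s i ≤ 1 / 3)).card ≤ 3 := by
  have hbig' : 3/5 < s i₀ := by
    have : (0.6 : ℝ) = 3/5 := by norm_num
    linarith [hbig]
  have hspos : ∀ i, 0 < s i := fun i => lt_trans (by norm_num) (hall i)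
  -- bounds from containment in the unit square
  have hbounds : ∀ i j, 0 ≤ c i j ∧ c i j + s i ≤ 1 := by
    intro i j
    have h1 : (fun k => c i k) ∈ (Set.univ.pi fun j => Set.Icc (c i j) (c i j + s i)) := by
      intro k _
      dsimp only
      exact ⟨le_refl _, by linarith [hspos i]⟩
    have h2 : (fun k => c i k + s i) ∈ (Set.univ.pi fun j => Set.Icc (c i j) (c i j + s i)) := by
      intro k _
      dsimp only
      exact ⟨by linarith [hspos i], le_refl _⟩
    have hb1 := hsub i h1 j (Set.mem_univ j)
    have hb2 := hsub i h2 j (Set.mem_univ j)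
    exact ⟨hb1.1, hb2.2⟩
  -- separation from disjointness of interiors
  have hsep0 : ∀ i j, i ≠ j → c i 0 + s i ≤ c j 0 ∨ c j 0 + s j ≤ c i 0 ∨
      c i 1 + s i ≤ c j 1 ∨ c j 1 + s j ≤ c i 1 := by
    intro i j hij
    by_contra hcon
    push_neg at hcon
    obtain ⟨h1, h2, h3, h4⟩ := hcon
    have hint : ∀ m : Fin n, interior (Set.univ.pi fun k => Set.Icc (c m k) (c m k + s m)) =
        Set.univ.pi fun k => Set.Ioo (c m k) (c m k + s m) := by
      intro m
      rw [interior_pi_set Set.finite_univ]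
      simp [interior_Icc]
    set p : Fin 2 → ℝ := fun k =>
      (max (c i k) (c j k) + min (c i k + s i) (c j k + s j)) / 2 with hp
    have hlt : ∀ k, max (c i k) (c j k) < min (c i k + s i) (c j k + s j) := by
      intro k
      fin_cases k
      · exact max_lt (lt_min (by linarith [hspos i]) h2) (lt_min h1 (by linarith [hspos j]))
      · exact max_lt (lt_min (by linarith [hspos i]) h4) (lt_min h3 (by linarith [hspos j]))
    have hpi : p ∈ interior (Set.univ.pi fun k => Set.Icc (c i k) (c i k + s i)) := by
      rw [hint]
      intro k _
      constructor
      · calc c i k ≤ max (c i k) (c j k) := le_max_left _ _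
          _ < p k := by have := hlt k; simp only [hp]; linarith
      · calc p k < min (c i k + s i) (c j k + s j) := by have := hlt k; simp only [hp]; linarith
          _ ≤ c i k + s i := min_le_left _ _
    have hpj : p ∈ interior (Set.univ.pi fun k => Set.Icc (c j k) (c j k + s j)) := by
      rw [hint]
      intro k _
      constructor
      · calc c j k ≤ max (c i k) (c j k) := le_max_right _ _
          _ < p k := by have := hlt k; simp only [hp]; linarith
      · calc p k < min (c i k + s i) (c j k + s j) := by have := hlt k; simp only [hp]; linarith
          _ ≤ c j k + s j := min_le_right _ _
    exact Set.disjoint_left.mp (hdisj i j hij) hpi hpj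
  -- normalize each coordinate by a possible reflection
  have hX : ∀ u : Fin 2, ∃ x : Fin n → ℝ, x i₀ ≤ 1/5 ∧ (∀ i, 0 ≤ x i ∧ x i + s i ≤ 1) ∧
      (∀ i j, (x i + s i ≤ x j ∨ x j + s j ≤ x i) ↔
        (c i u + s i ≤ c j u ∨ c j u + s j ≤ c i u)) := by
    intro u
    rcases le_or_gt (c i₀ u) (1/5) with h | h
    · exact ⟨fun i => c i u, h, fun i => hbounds i u, fun i j => Iff.rfl⟩
    · refine ⟨fun i => 1 - s i - c i u, ?_, ?_, ?_⟩
      · have := (hbounds i₀ u).2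
        linarith
      · intro i
        have h1 := (hbounds i u).1
        have h2 := (hbounds i u).2
        constructor <;> simp only [] <;> linarith
      · intro i j
        simp only []
        constructor
        · rintro (h' | h')
          · exact Or.inr (by linarith)
          · exact Or.inl (by linarith)
        · rintro (h' | h')
          · exact Or.inr (by linarith)
          · exact Or.inl (by linarith)
  obtain ⟨x, hx0, hbx, hxiff⟩ := hX 0
  obtain ⟨y, hy0, hby, hyiff⟩ := hX 1
  refine square_packing_core n x y s i₀ hbig' (fun i => hall i) hx0 hy0
    (fun i => ⟨(hbx i).1, (hbx i).2, (hby i).1, (hby i).2⟩) ?_ hthree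
  intro i j hij
  rcases hsep0 i j hij with h | h | h | h
  · rcases (hxiff i j).mpr (Or.inl h) with h' | h'
    · exact Or.inl h'
    · exact Or.inr (Or.inl h')
  · rcases (hxiff i j).mpr (Or.inr h) with h' | h'
    · exact Or.inl h'
    · exact Or.inr (Or.inl h')
  · rcases (hyiff i j).mpr (Or.inl h) with h' | h'
    · exact Or.inr (Or.inr (Or.inl h'))
    · exact Or.inr (Or.inr (Or.inr h'))
  · rcases (hyiff i j).mpr (Or.inr h) with h' | h'
    · exact Or.inr (Or.inr (Or.inl h'))
    · exact Or.inr (Or.inr (Or.inr h'))
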